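/- Let N ≥ 1 and m ≥ 1 be integers and let G₁,…,G_m ∈ ℂ[x₀,…,x_N] be homogeneous polynomials with G_i of degree d_i ≥ 1. If 2·(d₁+⋯+d_m) ≤ N + m, then any two points of the common projective zero locus X of G₁,…,G_m are joined by a chain of two lines contained in X: for any nonzero v, w ∈ ℂ^{N+1} with G_i(v) = G_i(w) = 0 for all i, there exists a nonzero vector p ∈ ℂ^{N+1} such that G_i(a·v + b·p) = 0 and G_i(a·p + b·w) = 0 for every i = 1,…,m and all a, b ∈ ℂ. -/

import Mathlib

/-!
Expand `G (a • v + x) = ∑ⱼ aʲ Gⱼ(x)` with `Gⱼ` homogeneous of degree `d - j`: then `G₀ = G` and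
`G_d` is the constant `G(v)`, so the line through `v` and `p` lies on `G = 0` once `G(v) = 0`,
`G(p) = 0` and `Gⱼ(p) = 0` for `0 < j < d`. Doing this for `v` and for `w` imposes
`2∑ dᵢ - m ≤ N` homogeneous conditions of positive degree on `p ∈ ℂ^{N+1}`. Fewer than `N + 1`
polynomials vanishing at `0` have another common zero: otherwise, by the Nullstellensatz, a
minimal prime over them contains the maximal ideal at `0`, of height `N + 1`, against Krull's
height theorem.
-/

open Finset

namespace MvPolynomial

section Translation

variable {R σ : Type*} [CommRing R]

noncomputable def translation (a : σ → R) : MvPolynomial σ R ≃ₐ[R] MvPolynomial σ R :=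
  AlgEquiv.ofAlgHom (aeval fun i => X i + C (a i)) (aeval fun i => X i - C (a i))
    (by ext; simp) (by ext; simp)

@[simp]
lemma eval_translation (a x : σ → R) (φ : MvPolynomial σ R) :
    eval x (translation a φ) = eval (x + a) φ := by
  change aeval x (aeval _ φ) = aeval (x + a) φ
  rw [← AlgHom.comp_apply, comp_aeval]
  congr
  funext i
  simp

end Translation

section Nullstellensatz

variable {k σ : Type*} [Field k]

lemma vanishingIdeal_singleton_eq_comap_translation (a : σ → k) :
    vanishingIdeal k {a} =
      (vanishingIdeal k {(0 : σ → k)}).comap (translation a).toRingEquiv := by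
  ext φ
  simp

variable [IsAlgClosed k] [Finite σ]

lemma height_vanishingIdeal_singleton (a : σ → k) :
    (vanishingIdeal k {a}).height = Nat.card σ := by
  have height_eq (x : σ → k) :
      (vanishingIdeal k {x}).height = (vanishingIdeal k {(0 : σ → k)}).height := by
    rw [vanishingIdeal_singleton_eq_comap_translation, RingEquiv.height_comap]
  -- every maximal ideal is a translate of the one at `0`, so the dimension is its height
  have hsup : ⨆ (I : Ideal (MvPolynomial σ k)) (_ : I.IsMaximal), I.height =
      (vanishingIdeal k {(0 : σ → k)}).height := by
    refine le_antisymm (iSup₂_le fun I hI => ?_) (le_iSup₂_of_le _ ?_ le_rfl)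
    · obtain ⟨x, rfl⟩ := isMaximal_iff_eq_vanishingIdeal_singleton.mp hI
      exact (height_eq x).le
    · exact isMaximal_iff_eq_vanishingIdeal_singleton.mpr ⟨0, rfl⟩
  have hdim := Ideal.sup_isMaximal_height_eq_ringKrullDim (R := MvPolynomial σ k)
  rw [hsup, ringKrullDim_of_isNoetherianRing, ringKrullDim_eq_zero_of_field, zero_add] at hdim
  rw [height_eq]
  exact_mod_cast hdim

theorem exists_ne_forall_eval_eq_zero (s : Finset (MvPolynomial σ k)) (hs : s.card < Nat.card σ)
    (a : σ → k) (ha : ∀ f ∈ s, eval a f = 0) : ∃ x ≠ a, ∀ f ∈ s, eval x f = 0 := by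
  by_contra! h
  have hle : Ideal.span (s : Set (MvPolynomial σ k)) ≤ vanishingIdeal k {a} :=
    Ideal.span_le.mpr fun f hf => by simpa using ha f hf
  obtain ⟨P, hP⟩ := Ideal.nonempty_minimalPrimes (ne_top_of_le_ne_top
    (isMaximal_iff_eq_vanishingIdeal_singleton.mpr ⟨a, rfl⟩).ne_top hle)
  have := hP.isPrime
  have hzero : zeroLocus k P ⊆ {a} := by
    intro x hx
    by_contra hxa
    obtain ⟨f, hf, hfx⟩ := h x hxa
    exact hfx (by simpa using hx f (hP.1.2 (Ideal.subset_span hf)))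
  have hmax : vanishingIdeal k {a} ≤ P := by
    simpa using vanishingIdeal_anti_mono (k := k) hzero
  have hheight := (Ideal.height_mono hmax).trans
    (Ideal.height_le_card_of_mem_minimalPrimes_span_finset hP)
  rw [height_vanishingIdeal_singleton] at hheight
  exact hs.not_ge (by exact_mod_cast hheight)

end Nullstellensatz

section Homogeneous

variable {R σ : Type*} [CommRing R] {φ : MvPolynomial σ R} {e : ℕ}

lemma IsHomogeneous.eval_smul (hφ : φ.IsHomogeneous e) (c : R) (x : σ → R) :
    eval (c • x) φ = c ^ e * eval x φ := by
  rw [eval_eq, eval_eq, mul_sum]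
  refine sum_congr rfl fun u hu => ?_
  have hdeg : ∑ i ∈ u.support, u i = e := by
    simpa [Finsupp.weight_apply, Finsupp.sum] using hφ (mem_support_iff.mp hu)
  simp only [Pi.smul_apply, smul_eq_mul, mul_pow, prod_mul_distrib, prod_pow_eq_pow_sum, hdeg]
  ring

lemma IsHomogeneous.eval_zero (hφ : φ.IsHomogeneous e) (he : e ≠ 0) : eval 0 φ = 0 := by
  simpa [zero_pow he] using hφ.eval_smul 0 0

end Homogeneous

section Line

variable {R : Type*} [CommRing R] {n e : ℕ} {G : MvPolynomial (Fin n) R}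

noncomputable def linePoly (v : Fin n → R) (G : MvPolynomial (Fin n) R) :
    MvPolynomial (Fin (n + 1)) R :=
  aeval (fun i => C (v i) * X 0 + X i.succ) G

/-- `G (a • v + x) = ∑ j, a ^ j * eval x (lineCoeff v G j)` (see `eval_smul_add_smul`): the
variable `X 0` of `linePoly v G` stands for the scalar `a`. -/
noncomputable def lineCoeff (v : Fin n → R) (G : MvPolynomial (Fin n) R) (j : ℕ) :
    MvPolynomial (Fin n) R :=
  (finSuccEquiv R n (linePoly v G)).coeff j

lemma IsHomogeneous.linePoly (hG : G.IsHomogeneous e) (v : Fin n → R) :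
    (linePoly v G).IsHomogeneous e := by
  have := hG.aeval (fun i => C (v i) * X 0 + X i.succ) fun i =>
    (isHomogeneous_C_mul_X (v i) 0).add (isHomogeneous_X R i.succ)
  rwa [one_mul] at this

lemma eval_cons_linePoly (v x : Fin n → R) (a : R) :
    eval (Fin.cons a x) (linePoly v G) = eval (a • v + x) G := by
  change aeval _ (aeval _ G) = aeval _ G
  rw [← AlgHom.comp_apply, comp_aeval]
  congr
  funext i
  simp [mul_comm]

lemma isHomogeneous_lineCoeff (hG : G.IsHomogeneous e) (v : Fin n → R) {j : ℕ} (hj : j ≤ e) :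
    (lineCoeff v G j).IsHomogeneous (e - j) :=
  (hG.linePoly v).finSuccEquiv_coeff_isHomogeneous j (e - j) (by omega)

lemma eval_smul_add_smul (hG : G.IsHomogeneous e) (v p : Fin n → R) (a b : R) :
    eval (a • v + b • p) G =
      ∑ j ∈ range (e + 1), a ^ j * b ^ (e - j) * eval p (lineCoeff v G j) := by
  have hdeg : (finSuccEquiv R n (linePoly v G)).natDegree < e + 1 := by
    linarith [natDegree_finSuccEquiv (linePoly v G), degreeOf_le_totalDegree (linePoly v G) 0,
      (hG.linePoly v).totalDegree_le]
  rw [← eval_cons_linePoly, eval_eq_eval_mv_eval', Polynomial.eval_eq_sum_range'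
    (Polynomial.natDegree_map_le.trans_lt hdeg)]
  refine sum_congr rfl fun j hj => ?_
  rw [Polynomial.coeff_map, ← lineCoeff,
    (isHomogeneous_lineCoeff hG v (Nat.lt_succ_iff.mp (mem_range.mp hj))).eval_smul]
  ring

lemma eval_lineCoeff_zero (v p : Fin n → R) : eval p (lineCoeff v G 0) = eval p G := by
  rw [lineCoeff, ← Polynomial.coeff_map, Polynomial.coeff_zero_eq_eval_zero,
    ← eval_eq_eval_mv_eval', eval_cons_linePoly, zero_smul, zero_add]

lemma eval_lineCoeff_self (hG : G.IsHomogeneous e) (v p : Fin n → R) :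
    eval p (lineCoeff v G e) = eval v G := by
  have h := eval_smul_add_smul hG v p 1 0
  rw [one_smul, zero_smul, add_zero, sum_eq_single e] at h
  · simpa using h.symm
  · intro j hj hje
    rw [zero_pow (by have := mem_range.mp hj; omega), mul_zero, zero_mul]
  · simp

variable [DecidableEq R]

noncomputable def middleLineCoeffs (v : Fin n → R) (G : MvPolynomial (Fin n) R) (e : ℕ) :
    Finset (MvPolynomial (Fin n) R) :=
  (Ioo 0 e).image (lineCoeff v G)

lemma mem_middleLineCoeffs {v : Fin n → R} {f : MvPolynomial (Fin n) R} :
    f ∈ middleLineCoeffs v G e ↔ ∃ j ∈ Ioo 0 e, lineCoeff v G j = f :=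
  mem_image

lemma card_middleLineCoeffs_le (v : Fin n → R) (G : MvPolynomial (Fin n) R) (e : ℕ) :
    (middleLineCoeffs v G e).card ≤ e - 1 :=
  card_image_le.trans (Nat.card_Ioo 0 e).le

lemma eval_zero_of_mem_middleLineCoeffs (hG : G.IsHomogeneous e) {v : Fin n → R}
    {f : MvPolynomial (Fin n) R} (hf : f ∈ middleLineCoeffs v G e) : eval 0 f = 0 := by
  obtain ⟨j, hj, rfl⟩ := mem_middleLineCoeffs.mp hf
  have hj := mem_Ioo.mp hj
  exact (isHomogeneous_lineCoeff hG v hj.2.le).eval_zero (by omega)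

lemma eval_smul_add_smul_eq_zero (hG : G.IsHomogeneous e) {v p : Fin n → R}
    (hv : eval v G = 0) (hp : eval p G = 0)
    (hmid : ∀ f ∈ middleLineCoeffs v G e, eval p f = 0) (a b : R) :
    eval (a • v + b • p) G = 0 := by
  rw [eval_smul_add_smul hG]
  refine sum_eq_zero fun j hj => ?_
  suffices eval p (lineCoeff v G j) = 0 by rw [this, mul_zero]
  rcases Nat.eq_zero_or_pos j with rfl | hj0
  · rwa [eval_lineCoeff_zero]
  rcases (Nat.lt_succ_iff.mp (mem_range.mp hj)).lt_or_eq with hje | rfl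
  · exact hmid _ (mem_middleLineCoeffs.mpr ⟨j, mem_Ioo.mpr ⟨hj0, hje⟩, rfl⟩)
  · rwa [eval_lineCoeff_self hG]

end Line

end MvPolynomial

open MvPolynomial

theorem conic_connected_of_degree_bound_general
    (N m : ℕ)
    (d : Fin m → ℕ) (hd : ∀ i, 1 ≤ d i)
    (G : Fin m → MvPolynomial (Fin (N + 1)) ℂ)
    (hG : ∀ i, (G i).IsHomogeneous (d i))
    (hnum : 2 * (∑ i, d i) ≤ N + m)
    (v w : Fin (N + 1) → ℂ)
    (hGv : ∀ i, MvPolynomial.eval v (G i) = 0)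
    (hGw : ∀ i, MvPolynomial.eval w (G i) = 0) :
    ∃ p : Fin (N + 1) → ℂ, p ≠ 0 ∧
      ∀ (i : Fin m) (a b : ℂ),
        MvPolynomial.eval (a • v + b • p) (G i) = 0 ∧
        MvPolynomial.eval (a • p + b • w) (G i) = 0 := by
  classical
  let middle (u : Fin (N + 1) → ℂ) := univ.biUnion fun i => middleLineCoeffs u (G i) (d i)
  let s := univ.image G ∪ middle v ∪ middle w
  have hcard : s.card < Nat.card (Fin (N + 1)) := by
    have card_middle (u) : (middle u).card ≤ ∑ i, (d i - 1) :=
      card_biUnion_le.trans (sum_le_sum fun i _ => card_middleLineCoeffs_le _ _ _)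
    have hs : s.card ≤ (univ : Finset (Fin m)).card + ∑ i, (d i - 1) + ∑ i, (d i - 1) :=
      (card_union_le _ _).trans (add_le_add ((card_union_le _ _).trans
        (add_le_add card_image_le (card_middle v))) (card_middle w))
    have sum_pred : ∑ i, (d i - 1) + m = ∑ i, d i :=
      calc ∑ i, (d i - 1) + m = ∑ i, (d i - 1 + 1) := by simp [sum_add_distrib]
        _ = ∑ i, d i := sum_congr rfl fun i _ => Nat.sub_add_cancel (hd i)
    simp only [card_univ, Fintype.card_fin, Nat.card_eq_fintype_card] at hs ⊢
    omega
  have hzero : ∀ f ∈ s, eval 0 f = 0 := by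
    simp only [s, middle, mem_union, mem_image, mem_biUnion, mem_univ, true_and]
    rintro f ((⟨i, rfl⟩ | ⟨i, hf⟩) | ⟨i, hf⟩)
    · exact (hG i).eval_zero (by have := hd i; omega)
    all_goals exact eval_zero_of_mem_middleLineCoeffs (hG i) hf
  obtain ⟨p, hp, hps⟩ := exists_ne_forall_eval_eq_zero s hcard 0 hzero
  have hpG (i) : eval p (G i) = 0 := hps _ (by simp [s])
  refine ⟨p, hp, fun i a b => ⟨?_, ?_⟩⟩
  · exact eval_smul_add_smul_eq_zero (hG i) (hGv i) (hpG i) (fun f hf => hps f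
      (mem_union_left _ (mem_union_right _ (mem_biUnion.mpr ⟨i, mem_univ i, hf⟩)))) a b
  · rw [add_comm (a • p)]
    exact eval_smul_add_smul_eq_zero (hG i) (hGw i) (hpG i)
      (fun f hf => hps f (mem_union_right _ (mem_biUnion.mpr ⟨i, mem_univ i, hf⟩))) b a

/-- The case `l = 2`: if `2 * ∑ d i ≤ N + m` then any two points of the common zero
locus are joined by a chain of two lines (a possibly degenerate conic) inside it. -/
theorem conic_connected_of_degree_bound
    (N m : ℕ) (hN : 1 ≤ N) (hm : 1 ≤ m)
    (d : Fin m → ℕ) (hd : ∀ i, 1 ≤ d i)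
    (G : Fin m → MvPolynomial (Fin (N + 1)) ℂ)
    (hG : ∀ i, (G i).IsHomogeneous (d i))
    (hnum : 2 * (∑ i, d i) ≤ N + m)
    (v w : Fin (N + 1) → ℂ) (hv : v ≠ 0) (hw : w ≠ 0)
    (hGv : ∀ i, MvPolynomial.eval v (G i) = 0)
    (hGw : ∀ i, MvPolynomial.eval w (G i) = 0) :
    ∃ p : Fin (N + 1) → ℂ, p ≠ 0 ∧
      ∀ (i : Fin m) (a b : ℂ),
        MvPolynomial.eval (a • v + b • p) (G i) = 0 ∧
        MvPolynomial.eval (a • p + b • w) (G i) = 0 :=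
  conic_connected_of_degree_bound_general N m d hd G hG hnum v w hGv hGw
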